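/- Under the UGapE setting with valid intervals: let arms i ∈ S have true values V_i ∈ [L_i, U_i], let s* be the arm with the largest true value and s₂* the second largest, let b = argmin_i B_i with B_i = max_{j≠i} U_j − L_i and c = argmax_{j≠b} U_j, and suppose the algorithm has not stopped: U_c − L_b > ε. If s* ∈ {b, c} and the arm R selected among {b, c} (the one with the wider interval) equals s*, then 2·(U_R − L_R) ≥ V(s*) − V(s₂*) + ε·[R = b]; in particular 2·(U_R − L_R) ≥ V(s*) − V(s₂*). -/

import Mathlib

/-!
If `R = b` is optimal, `c` is not, so the gap is at most `U_b − L_c`; adding the non-stopping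
condition `ε < U_c − L_b` bounds gap plus `ε` by the sum of the two widths. If `R = c` is optimal,
the gap is at most `U_c − L_b`, and the choice of `b` as minimiser of `B` forces `L_c ≤ L_b`
when `c`'s interval is the wider one.
-/

section UGapE

variable {ι : Type*} (U : ι → ℝ) {b c : ι}

theorem sSup_image_ne_eq (hcb : c ≠ b) (hc : ∀ j, j ≠ b → U j ≤ U c) :
    sSup (U '' {j | j ≠ b}) = U c :=
  IsGreatest.csSup_eq ⟨⟨c, hcb, rfl⟩, by rintro _ ⟨j, hj, rfl⟩; exact hc j hj⟩

theorem sSup_image_ne_le_max (hcb : c ≠ b) (hc : ∀ j, j ≠ b → U j ≤ U c) :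
    sSup (U '' {j | j ≠ c}) ≤ max (U b) (U c) := by
  refine csSup_le ⟨U b, b, hcb.symm, rfl⟩ ?_
  rintro _ ⟨j, -, rfl⟩
  by_cases hjb : j = b
  · exact hjb ▸ le_max_left _ _
  · exact (hc j hjb).trans (le_max_right _ _)

theorem lower_le_of_gapIndex_le (L : ι → ℝ) (hcb : c ≠ b) (hc : ∀ j, j ≠ b → U j ≤ U c)
    (hgap : sSup (U '' {j | j ≠ b}) - L b ≤ sSup (U '' {j | j ≠ c}) - L c)
    (hwide : U b - L b ≤ U c - L c) : L c ≤ L b := by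
  have hmax : U c - L b ≤ max (U b) (U c) - L c := by
    calc U c - L b = sSup (U '' {j | j ≠ b}) - L b := by rw [sSup_image_ne_eq U hcb hc]
      _ ≤ sSup (U '' {j | j ≠ c}) - L c := hgap
      _ ≤ max (U b) (U c) - L c := by gcongr; exact sSup_image_ne_le_max U hcb hc
  rcases max_cases (U b) (U c) with ⟨h, -⟩ | ⟨h, -⟩ <;> linarith

end UGapE

theorem stmt17_general {ι : Type*} [DecidableEq ι]
    (V L U : ι → ℝ) (ε : ℝ) (hε : 0 ≤ ε)
    (hvalid : ∀ i, L i ≤ V i ∧ V i ≤ U i)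
    (sstar s2 : ι)
    (hs2' : ∀ j, j ≠ sstar → V j ≤ V s2)
    (B : ι → ℝ) (hB : ∀ i, B i = sSup (U '' {j | j ≠ i}) - L i)
    (b c : ι) (hb : ∀ i, B b ≤ B i)
    (hcb : c ≠ b) (hc : ∀ j, j ≠ b → U j ≤ U c)
    (hstop : ε < U c - L b)
    (R : ι) (hR : R = b ∨ R = c)
    (hwide : U b - L b ≤ U R - L R ∧ U c - L c ≤ U R - L R)
    (hRstar : R = sstar) :
    V sstar - V s2 + (if R = b then ε else 0) ≤ 2 * (U R - L R) ∧
    V sstar - V s2 ≤ 2 * (U R - L R) := by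
  obtain ⟨hLVb, hVUb⟩ := hvalid b
  obtain ⟨hLVc, hVUc⟩ := hvalid c
  rcases hR with hRb | hRc
  · subst R sstar
    have hVc : V c ≤ V s2 := hs2' c hcb
    rw [if_pos rfl]
    constructor <;> linarith [hwide.2]
  · subst R sstar
    have hVb : V b ≤ V s2 := hs2' b hcb.symm
    have hL : L c ≤ L b :=
      lower_le_of_gapIndex_le U L hcb hc (hB b ▸ hB c ▸ hb c) hwide.1
    rw [if_neg hcb]
    constructor <;> linarith

/-- UGapE, cases where the selected arm is the optimal one: if the algorithm has
not stopped (`U_c − L_b > ε`) and the wider-interval arm `R ∈ {b, c}` equals the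
best arm `s*`, then `2·(U_R − L_R) ≥ V(s*) − V(s₂*) + ε·[R = b]`; in particular
`2·(U_R − L_R) ≥ V(s*) − V(s₂*)`. -/
theorem stmt17 {ι : Type*} [Fintype ι] [DecidableEq ι]
    (hcard : 1 < Fintype.card ι)
    (V L U : ι → ℝ) (ε : ℝ) (hε : 0 ≤ ε)
    (hvalid : ∀ i, L i ≤ V i ∧ V i ≤ U i)
    (sstar s2 : ι) (hstar : ∀ i, V i ≤ V sstar)
    (hs2 : s2 ≠ sstar) (hs2' : ∀ j, j ≠ sstar → V j ≤ V s2)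
    (B : ι → ℝ) (hB : ∀ i, B i = sSup (U '' {j | j ≠ i}) - L i)
    (b c : ι) (hb : ∀ i, B b ≤ B i)
    (hcb : c ≠ b) (hc : ∀ j, j ≠ b → U j ≤ U c)
    (hstop : ε < U c - L b)
    (R : ι) (hR : R = b ∨ R = c)
    (hwide : U b - L b ≤ U R - L R ∧ U c - L c ≤ U R - L R)
    (hRstar : R = sstar) :
    V sstar - V s2 + (if R = b then ε else 0) ≤ 2 * (U R - L R) ∧
    V sstar - V s2 ≤ 2 * (U R - L R) :=
  stmt17_general V L U ε hε hvalid sstar s2 hs2' B hB b c hb hcb hc hstop R hR hwide hRstar
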